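/- Let G be a connected graph, A ⪰ 0 a d×d matrix, p ∈ [1,∞], and suppose 𝓔_p(G;A) := inf{ ‖(u_iᵀ A u_i)_{i∈V}‖_p : u a unit-distance representation of G in ℝ^d } is finite. Then the infimum is attained: there is a unit-distance representation u of G in ℝ^d with ‖(u_iᵀ A u_i)_i‖_p = 𝓔_p(G;A). -/

import Mathlib

open scoped RealInnerProductSpace

def IsUnitDistRep {V : Type*} (G : SimpleGraph V) {d : ℕ}
    (u : V → EuclideanSpace ℝ (Fin d)) : Prop :=
  ∀ i j, G.Adj i j → ‖u i - u j‖ = 1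

def IsHypersphereRep {V : Type*} (G : SimpleGraph V) {d : ℕ}
    (u : V → EuclideanSpace ℝ (Fin d)) (t : ℝ) : Prop :=
  IsUnitDistRep G u ∧ ∀ i, ‖u i‖ ^ 2 = t

noncomputable def hypersphereNumber {V : Type*} (G : SimpleGraph V) : ℝ :=
  sInf {t | ∃ (d : ℕ) (u : V → EuclideanSpace ℝ (Fin d)), IsHypersphereRep G u t}

open Matrix

open scoped ENNReal

/-- The objective `‖(uᵢᵀ A uᵢ)_{i∈V}‖_p`. -/
noncomputable def objP {V : Type*} [Fintype V] (p : ℝ≥0∞) [Fact (1 ≤ p)] {d : ℕ}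
    (A : Matrix (Fin d) (Fin d) ℝ) (u : V → EuclideanSpace ℝ (Fin d)) : ℝ :=
  ‖(WithLp.equiv p (∀ _ : V, ℝ)).symm
    (fun i => dotProduct (WithLp.equiv 2 (Fin d → ℝ) (u i))
      (A *ᵥ WithLp.equiv 2 (Fin d → ℝ) (u i)))‖

/-!
Factor `A = Bᴴ B`, so that `uᵢᵀ A uᵢ = ‖B uᵢ‖²` and the objective only sees the image
`z = (B uᵢ)ᵢ` of a representation. The objective is coercive in `z` (it dominates `maxᵢ ‖zᵢ‖²`),
so it suffices that these images form a closed set. A representation is a translate of one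
pinned to `0` at a fixed vertex, and the pinned ones form a compact set since every vertex is
within its graph distance of the pinned one. So the set of images is a compact set plus the
linear subspace of constant families `(B c)ᵢ`, hence closed.
-/

open Filter Topology
open scoped Pointwise

section LpNormSq

variable {V F : Type*} [Fintype V] [NormedAddCommGroup F] (p : ℝ≥0∞) [Fact (1 ≤ p)]

noncomputable def lpNormSq (z : V → F) : ℝ :=
  ‖WithLp.toLp p (fun i => ‖z i‖ ^ 2)‖

theorem sq_norm_le_lpNormSq (z : V → F) : ‖z‖ ^ 2 ≤ lpNormSq p z := by
  have hcoord : ∀ i, ‖z i‖ ^ 2 ≤ lpNormSq p z := fun i =>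
    (le_abs_self _).trans (PiLp.norm_apply_le (WithLp.toLp p (fun i => ‖z i‖ ^ 2)) i)
  refine (Real.le_sqrt (norm_nonneg _) (norm_nonneg _)).mp ?_
  exact (pi_norm_le_iff_of_nonneg (Real.sqrt_nonneg _)).mpr fun i =>
    (Real.le_sqrt (norm_nonneg _) (norm_nonneg _)).mpr (hcoord i)

theorem tendsto_lpNormSq_cocompact [ProperSpace F] :
    Tendsto (lpNormSq p) (cocompact (V → F)) atTop :=
  tendsto_atTop_mono (sq_norm_le_lpNormSq p)
    ((tendsto_pow_atTop two_ne_zero).comp tendsto_norm_cocompact_atTop)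

theorem continuous_lpNormSq : Continuous (lpNormSq (V := V) (F := F) p) :=
  ((PiLp.continuous_toLp p _).comp (by fun_prop)).norm

end LpNormSq

namespace SimpleGraph

variable {V : Type*} {G : SimpleGraph V} {E : Type*} [NormedAddCommGroup E]

variable (G E) in
def unitDistReps : Set (V → E) :=
  {u | ∀ i j, G.Adj i j → ‖u i - u j‖ = 1}

theorem isClosed_unitDistReps : IsClosed (G.unitDistReps E) := by
  simp only [unitDistReps, Set.ofPred_forall]
  exact isClosed_iInter fun i => isClosed_iInter fun j => isClosed_iInter fun _ =>
    isClosed_eq (by fun_prop) continuous_const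

theorem add_const_mem_unitDistReps {u : V → E} (hu : u ∈ G.unitDistReps E) (c : E) :
    (fun i => u i + c) ∈ G.unitDistReps E := fun i j hij => by
  simpa only [add_sub_add_right_eq_sub] using hu i j hij

theorem Walk.norm_sub_le_length {u : V → E} (hu : ∀ i j, G.Adj i j → ‖u i - u j‖ ≤ 1)
    {i j : V} : ∀ w : G.Walk i j, ‖u i - u j‖ ≤ w.length
  | .nil => by simp
  | .cons hab w => by
    rw [length_cons, Nat.cast_succ, add_comm]
    exact (norm_sub_le_norm_sub_add_norm_sub _ _ _).trans
      (add_le_add (hu _ _ hab) (w.norm_sub_le_length hu))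

theorem Connected.norm_sub_le_dist {u : V → E} (hG : G.Connected)
    (hu : ∀ i j, G.Adj i j → ‖u i - u j‖ ≤ 1) (i j : V) : ‖u i - u j‖ ≤ G.dist i j := by
  obtain ⟨w, hw⟩ := hG.exists_walk_length_eq_dist i j
  exact hw ▸ w.norm_sub_le_length hu

theorem Connected.isCompact_unitDistReps_inter_apply_eq_zero [Finite V] [ProperSpace E]
    (hG : G.Connected) (i₀ : V) : IsCompact (G.unitDistReps E ∩ {u | u i₀ = 0}) := by
  refine (isCompact_univ_pi fun i => isCompact_closedBall (0 : E) (G.dist i i₀)).of_isClosed_subset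
    (isClosed_unitDistReps.inter (isClosed_eq (continuous_apply i₀) continuous_const)) ?_
  rintro u ⟨hu, hu₀ : u i₀ = 0⟩ i -
  have := hG.norm_sub_le_dist (fun i j hij => (hu i j hij).le) i i₀
  rwa [hu₀, sub_zero, ← dist_zero_right] at this

variable [NormedSpace ℝ E] [FiniteDimensional ℝ E] {F : Type*} [NormedAddCommGroup F]
  [NormedSpace ℝ F]

theorem Connected.isClosed_image_unitDistReps [Finite V] (hG : G.Connected) (L : E →ₗ[ℝ] F) :
    IsClosed ((fun u i => L (u i)) '' G.unitDistReps E) := by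
  obtain ⟨i₀⟩ := hG.nonempty
  have hL : Continuous L := L.continuous_of_finiteDimensional
  have hsplit : (fun u i => L (u i)) '' G.unitDistReps E =
      (fun u i => L (u i)) '' (G.unitDistReps E ∩ {u | u i₀ = 0}) +
        (LinearMap.range (LinearMap.pi fun _ : V => L) : Set (V → F)) := by
    ext z
    constructor
    · rintro ⟨u, hu, rfl⟩
      refine ⟨_, ⟨fun i => u i + -u i₀, ⟨add_const_mem_unitDistReps hu _, add_neg_cancel _⟩, rfl⟩,
        _, ⟨u i₀, rfl⟩, ?_⟩
      ext i
      simp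
    · rintro ⟨_, ⟨δ, ⟨hδ, -⟩, rfl⟩, _, ⟨c, rfl⟩, rfl⟩
      refine ⟨_, add_const_mem_unitDistReps hδ c, ?_⟩
      ext i
      simp
  rw [hsplit]
  exact (Submodule.closed_of_finiteDimensional _).add_left_of_isCompact
    ((hG.isCompact_unitDistReps_inter_apply_eq_zero i₀).image (by fun_prop))

theorem Connected.exists_isMinOn_lpNormSq_unitDistReps [Fintype V] [FiniteDimensional ℝ F]
    (hG : G.Connected) (L : E →ₗ[ℝ] F) (p : ℝ≥0∞) [Fact (1 ≤ p)]
    (hS : (G.unitDistReps E).Nonempty) :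
    ∃ u ∈ G.unitDistReps E,
      IsMinOn (fun u => lpNormSq p fun i => L (u i)) (G.unitDistReps E) u := by
  obtain ⟨u₀, hu₀⟩ := hS
  obtain ⟨_, ⟨u, hu, rfl⟩, hmin⟩ :=
    (continuous_lpNormSq p).continuousOn.exists_isMinOn' (hG.isClosed_image_unitDistReps L)
      (Set.mem_image_of_mem _ hu₀)
      (((tendsto_lpNormSq_cocompact p).eventually_ge_atTop _).filter_mono inf_le_left)
  exact ⟨u, hu, hmin.comp_mapsTo (Set.mapsTo_image _ _) rfl⟩

end SimpleGraph

open scoped ComplexOrder MatrixOrder in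
theorem Matrix.PosSemidef.exists_eq_conjTranspose_mul_self {n 𝕜 : Type*} [Fintype n]
    [DecidableEq n] [RCLike 𝕜] {A : Matrix n n 𝕜} (hA : A.PosSemidef) :
    ∃ B : Matrix n n 𝕜, A = Bᴴ * B := by
  have hA₀ : 0 ≤ A := Matrix.nonneg_iff_posSemidef.mpr hA
  refine ⟨CFC.sqrt A, ?_⟩
  rw [← star_eq_conjTranspose, (CFC.sqrt_nonneg A).isSelfAdjoint.star_eq, CFC.sqrt_mul_sqrt_self A]

theorem Matrix.dotProduct_conjTranspose_mul_self_mulVec {m n : Type*} [Fintype m] [Fintype n]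
    [DecidableEq n] (B : Matrix m n ℝ) (x : EuclideanSpace ℝ n) :
    dotProduct (WithLp.equiv 2 (n → ℝ) x) ((Bᴴ * B) *ᵥ WithLp.equiv 2 (n → ℝ) x) =
      ‖Matrix.toLpLin 2 2 B x‖ ^ 2 := by
  rw [conjTranspose_eq_transpose_of_trivial, ← mulVec_mulVec, dotProduct_mulVec, vecMul_transpose,
    ← real_inner_self_eq_norm_sq, EuclideanSpace.inner_eq_star_dotProduct, toLpLin_apply,
    star_trivial]
  rfl

theorem objP_conjTranspose_mul_self {V : Type*} [Fintype V] (p : ℝ≥0∞) [Fact (1 ≤ p)] {d : ℕ}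
    (B : Matrix (Fin d) (Fin d) ℝ) (u : V → EuclideanSpace ℝ (Fin d)) :
    objP p (Bᴴ * B) u = lpNormSq p fun i => Matrix.toLpLin 2 2 B (u i) := by
  simp only [objP, dotProduct_conjTranspose_mul_self_mulVec]
  rfl

/-- If `𝓔_p(G;A)` is finite (some unit-distance representation of the connected graph `G`
exists in `ℝ^d`), then the infimum is attained. -/
theorem ellipsoid_attained {V : Type*} [Fintype V] (G : SimpleGraph V)
    (hG : G.Connected) {d : ℕ} (A : Matrix (Fin d) (Fin d) ℝ) (hA : A.PosSemidef)
    (p : ℝ≥0∞) [Fact (1 ≤ p)]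
    (hne : {r : ℝ | ∃ u : V → EuclideanSpace ℝ (Fin d),
      IsUnitDistRep G u ∧ r = objP p A u}.Nonempty) :
    ∃ u : V → EuclideanSpace ℝ (Fin d), IsUnitDistRep G u ∧
      objP p A u = sInf {r : ℝ | ∃ u' : V → EuclideanSpace ℝ (Fin d),
        IsUnitDistRep G u' ∧ r = objP p A u'} := by
  obtain ⟨B, rfl⟩ := hA.exists_eq_conjTranspose_mul_self
  obtain ⟨_, u₀, hu₀, -⟩ := hne
  obtain ⟨u, hu, hmin⟩ :=
    hG.exists_isMinOn_lpNormSq_unitDistReps (Matrix.toLpLin 2 2 B) p ⟨u₀, hu₀⟩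
  refine ⟨u, hu, ((?_ : IsLeast _ (objP p (Bᴴ * B) u)).csInf_eq).symm⟩
  refine ⟨⟨u, hu, rfl⟩, ?_⟩
  rintro _ ⟨v, hv, rfl⟩
  simpa only [objP_conjTranspose_mul_self] using isMinOn_iff.mp hmin v hv
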